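/- The collection of U-invariant sets (A ∈ B with 1_A U-invariant) is a σ-algebra, and a function u ∈ L^p(E,m) is U-invariant if and only if u is measurable with respect to this σ-algebra (up to m-a.e. equality). -/

import Mathlib

open MeasureTheory ProbabilityTheory Filter
open scoped NNReal ENNReal

/-- The resolvent operators acting on real functions: `U_α f (x) = ∫ f d(U α x)`. -/
noncomputable def Uop {E : Type*} [MeasurableSpace E]
    (U : ℝ → Kernel E E) (α : ℝ) (f : E → ℝ) (x : E) : ℝ :=
  ∫ y, f y ∂(U α x)

/-- `(U_α)` is a sub-Markovian resolvent of kernels: `α U_α 1 ≤ 1`. -/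
def SubMarkovResolvent {E : Type*} [MeasurableSpace E] (U : ℝ → Kernel E E) : Prop :=
  ∀ α > (0:ℝ), ∀ x : E, (U α x) Set.univ ≤ ENNReal.ofReal α⁻¹

/-- `m` is sub-invariant for `(U_α)`: `m(α U_α f) ≤ m(f)` for all `f ≥ 0` measurable. -/
def SubInvariantMeasure {E : Type*} [MeasurableSpace E]
    (m : Measure E) (U : ℝ → Kernel E E) : Prop :=
  ∀ α > (0:ℝ), ∀ f : E → ℝ≥0∞, Measurable f →
    ∫⁻ x, ENNReal.ofReal α * ∫⁻ y, f y ∂(U α x) ∂m ≤ ∫⁻ x, f x ∂m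

/-- Weak duality of `(U_α)` and `(Û_α)` w.r.t. `m`: `∫ f U_α g dm = ∫ g Û_α f dm`. -/
def WeakDuality {E : Type*} [MeasurableSpace E]
    (m : Measure E) (U Uhat : ℝ → Kernel E E) : Prop :=
  ∀ α > (0:ℝ), ∀ f g : E → ℝ≥0∞, Measurable f → Measurable g →
    ∫⁻ x, f x * ∫⁻ y, g y ∂(U α x) ∂m = ∫⁻ x, g x * ∫⁻ y, f y ∂(Uhat α x) ∂m

/-- `u` is `U`-invariant: `U_α(uf) = u U_α f` m-a.e. for all bounded measurable `f`, `α > 0`. -/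
def UInvariant {E : Type*} [MeasurableSpace E]
    (m : Measure E) (U : ℝ → Kernel E E) (u : E → ℝ) : Prop :=
  ∀ α > (0:ℝ), ∀ f : E → ℝ, Measurable f → (∃ C, ∀ x, |f x| ≤ C) →
    Uop U α (fun y => u y * f y) =ᵐ[m] fun x => u x * Uop U α f x

/-- `A` is a `U`-invariant set: `A` is measurable and `1_A` is `U`-invariant. -/
def UInvariantSet {E : Type*} [MeasurableSpace E]
    (m : Measure E) (U : ℝ → Kernel E E) (A : Set E) : Prop :=
  MeasurableSet A ∧ UInvariant m U (A.indicator fun _ => (1:ℝ))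

/-!
A measurable `w` is `U`-invariant exactly when, for every `α > 0` and `m`-a.e. `x`, it is
`U_α(x, ·)`-a.e. equal to the constant `w x`. One direction is immediate; for the other, testing
invariance against `1_S` and `w 1_S` gives `∫_S (w - w x)² dU_α(x, ·) = 0` on the sets
`S = {|w| ≤ n}`. This pointwise description is stable under composition and countable products,
so the invariant sets form a σ-algebra and the measurable functions for it are the measurable
invariant ones; sub-invariance of `m` lets us pass to an `m`-a.e. equal measurable version.
-/

def IsKernelConst {E β : Type*} [MeasurableSpace E] (m : Measure E) (U : ℝ → Kernel E E)
    (w : E → β) : Prop :=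
  ∀ α > (0:ℝ), ∀ᵐ x ∂m, ∀ᵐ y ∂(U α x), w y = w x

theorem ae_eq_const_of_integral_sq_eq {α : Type*} [MeasurableSpace α] {μ : Measure α}
    [IsFiniteMeasure μ] {v : α → ℝ} {c : ℝ} (hv : Integrable v μ)
    (hv2 : Integrable (fun y => v y ^ 2) μ) (h1 : ∫ y, v y ∂μ = c * μ.real Set.univ)
    (h2 : ∫ y, v y ^ 2 ∂μ = c * ∫ y, v y ∂μ) : v =ᵐ[μ] fun _ => c := by
  have hsq : (fun y => (v y - c) ^ 2) = fun y => v y ^ 2 - 2 * c * v y + c ^ 2 := by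
    funext y; ring
  have hvar : ∫ y, (v y - c) ^ 2 ∂μ = 0 := by
    rw [hsq, integral_add (f := fun y => v y ^ 2 - 2 * c * v y) (hv2.sub (hv.const_mul _))
      (integrable_const _), integral_sub hv2 (hv.const_mul _), integral_const_mul,
      integral_const, h2, h1, smul_eq_mul]
    ring
  have hzero := (integral_eq_zero_iff_of_nonneg (fun y => sq_nonneg (v y - c))
    (hsq ▸ (hv2.sub (hv.const_mul _)).add (integrable_const _))).1 hvar
  filter_upwards [hzero] with y hy
  simpa [sub_eq_zero] using hy

theorem integral_mul_indicator_one {α : Type*} [MeasurableSpace α] {μ : Measure α} {s : Set α}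
    (hs : MeasurableSet s) (g : α → ℝ) :
    ∫ y, g y * s.indicator 1 y ∂μ = ∫ y in s, g y ∂μ := by
  simp_rw [← Set.indicator_mul_right, Pi.one_apply, mul_one]
  exact integral_indicator hs

section

variable {E : Type*} [MeasurableSpace E] {m : Measure E} {U : ℝ → Kernel E E}

theorem SubMarkovResolvent.isFiniteMeasure (hU : SubMarkovResolvent U) {α : ℝ} (hα : 0 < α)
    (x : E) : IsFiniteMeasure (U α x) :=
  ⟨(hU α hα x).trans_lt ENNReal.ofReal_lt_top⟩

theorem SubInvariantMeasure.ae_ae_of_ae (hm : SubInvariantMeasure m U) {α : ℝ} (hα : 0 < α)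
    {P : E → Prop} (h : ∀ᵐ y ∂m, P y) : ∀ᵐ x ∂m, ∀ᵐ y ∂(U α x), P y := by
  obtain ⟨N, hPN, hN, hmN⟩ := exists_measurable_superset_of_null (ae_iff.1 h)
  have hint := hm α hα (N.indicator 1) (measurable_one.indicator hN)
  simp only [lintegral_indicator_one hN, hmN, nonpos_iff_eq_zero] at hint
  rw [lintegral_const_mul _ ((U α).measurable_coe hN), mul_eq_zero,
    or_iff_right (by simpa using hα), lintegral_eq_zero_iff ((U α).measurable_coe hN)] at hint
  filter_upwards [hint] with x hx
  exact measure_mono_null hPN hx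

theorem uInvariant_congr (hm : SubInvariantMeasure m U) {u v : E → ℝ} (huv : u =ᵐ[m] v)
    (hv : UInvariant m U v) : UInvariant m U u := by
  intro α hα f hf hfb
  filter_upwards [hm.ae_ae_of_ae hα huv, hv α hα f hf hfb, huv] with x hUx hvx hx
  have hUx' : (fun y => u y * f y) =ᵐ[U α x] fun y => v y * f y := by
    filter_upwards [hUx] with y hy
    rw [hy]
  rw [Uop, integral_congr_ae hUx', ← Uop, hvx, hx]

theorem IsKernelConst.uInvariant {u : E → ℝ} (h : IsKernelConst m U u) : UInvariant m U u := by
  intro α hα f _ _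
  filter_upwards [h α hα] with x hx
  have hx' : (fun y => u y * f y) =ᵐ[U α x] fun y => u x * f y := by
    filter_upwards [hx] with y hy
    rw [hy]
  rw [Uop, integral_congr_ae hx', integral_const_mul, Uop]

theorem IsKernelConst.of_uInvariant (hU : SubMarkovResolvent U) {w : E → ℝ} (hw : Measurable w)
    (h : UInvariant m U w) : IsKernelConst m U w := by
  intro α hα
  set S : ℕ → Set E := fun n => {y | |w y| ≤ n}
  have hS : ∀ n, MeasurableSet (S n) := fun n => measurableSet_le hw.abs measurable_const
  have h1 : ∀ n, ∀ᵐ x ∂m, Uop U α (fun y => w y * (S n).indicator 1 y) x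
      = w x * Uop U α ((S n).indicator 1) x := fun n =>
    h α hα _ (measurable_one.indicator (hS n))
      ⟨1, fun y => by by_cases hy : y ∈ S n <;> simp [hy]⟩
  have h2 : ∀ n, ∀ᵐ x ∂m, Uop U α (fun y => w y * (w y * (S n).indicator 1 y)) x
      = w x * Uop U α (fun y => w y * (S n).indicator 1 y) x := fun n =>
    h α hα _ (hw.mul (measurable_one.indicator (hS n)))
      ⟨n, fun y => by by_cases hy : y ∈ S n <;> simp_all [S]⟩
  filter_upwards [ae_all_iff.2 h1, ae_all_iff.2 h2] with x h1x h2x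
  have := hU.isFiniteMeasure hα x
  have hloc : ∀ n, ∀ᵐ y ∂(U α x), y ∈ S n → w y = w x := by
    intro n
    have hbdd : ∀ᵐ y ∂(U α x).restrict (S n), ‖w y‖ ≤ n :=
      ae_restrict_of_forall_mem (hS n) fun y hy => hy
    refine (ae_restrict_iff' (hS n)).1 (ae_eq_const_of_integral_sq_eq
      (.of_bound hw.aestronglyMeasurable _ hbdd)
      (.of_bound (hw.pow_const 2).aestronglyMeasurable (n ^ 2) ?_) ?_ ?_)
    · filter_upwards [hbdd] with y hy
      rw [norm_pow]
      exact pow_le_pow_left₀ (norm_nonneg _) hy 2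
    · simpa [Uop, integral_mul_indicator_one (hS n), integral_indicator_one (hS n)] using h1x n
    · simpa [Uop, ← mul_assoc, ← pow_two, integral_mul_indicator_one (hS n)] using h2x n
  filter_upwards [ae_all_iff.2 hloc] with y hy
  exact hy _ (Nat.le_ceil |w y|)

theorem IsKernelConst.comp {β γ : Type*} {w : E → β} (h : IsKernelConst m U w)
    (f : β → γ) : IsKernelConst m U (f ∘ w) := fun α hα => by
  filter_upwards [h α hα] with x hx
  filter_upwards [hx] with y hy
  rw [Function.comp_apply, hy, Function.comp_apply]

theorem IsKernelConst.of_comp {β γ : Type*} {w : E → β} {f : β → γ}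
    (h : IsKernelConst m U (f ∘ w)) (hf : f.Injective) : IsKernelConst m U w := fun α hα => by
  filter_upwards [h α hα] with x hx
  filter_upwards [hx] with y hy
  exact hf hy

theorem isKernelConst_pi {ι β : Type*} [Countable ι] {w : ι → E → β}
    (h : ∀ i, IsKernelConst m U (w i)) : IsKernelConst m U fun y i => w i y := fun α hα => by
  filter_upwards [ae_all_iff.2 fun i => h i α hα] with x hx
  filter_upwards [ae_all_iff.2 hx] with y hy
  exact funext hy

theorem isKernelConst_indicator_one_iff {A : Set E} :
    IsKernelConst m U (A.indicator fun _ => (1:ℝ)) ↔ IsKernelConst m U (· ∈ A) := by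
  have hiff : ∀ x y, A.indicator (fun _ => (1:ℝ)) y = A.indicator (fun _ => 1) x ↔
      (y ∈ A) = (x ∈ A) := by
    intro x y
    by_cases hx : x ∈ A <;> by_cases hy : y ∈ A <;> simp [hx, hy]
  simp only [IsKernelConst, hiff]

theorem uInvariantSet_iff (hU : SubMarkovResolvent U) {A : Set E} :
    UInvariantSet m U A ↔ MeasurableSet A ∧ IsKernelConst m U (· ∈ A) := by
  rw [UInvariantSet, ← isKernelConst_indicator_one_iff]
  exact and_congr_right fun hA =>
    ⟨.of_uInvariant hU (measurable_const.indicator hA), IsKernelConst.uInvariant⟩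

variable (m U) in
abbrev invariantSigma : MeasurableSpace E where
  MeasurableSet' A := MeasurableSet A ∧ IsKernelConst m U (· ∈ A)
  measurableSet_empty := ⟨.empty, fun _ _ => .of_forall fun _ => .of_forall fun _ => rfl⟩
  measurableSet_compl A hA := ⟨hA.1.compl, hA.2.comp Not⟩
  measurableSet_iUnion A hA :=
    ⟨.iUnion fun n => (hA n).1, by
      simpa only [Function.comp_def, Set.mem_iUnion] using
        (isKernelConst_pi fun n => (hA n).2).comp fun P => ∃ n, P n⟩

theorem measurable_invariantSigma_iff {v : E → ℝ} :
    Measurable[invariantSigma m U] v ↔ Measurable v ∧ IsKernelConst m U v := by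
  refine ⟨fun hv => ⟨hv.mono (fun _ hA => hA.1) le_rfl, ?_⟩,
    fun hv B hB => ⟨hv.1 hB, hv.2.comp (· ∈ B)⟩⟩
  refine (isKernelConst_pi fun q : ℚ => (hv measurableSet_Iio).2).of_comp
    (f := fun a (q : ℚ) => a < q) fun a b hab => le_antisymm
      (le_of_forall_lt_rat_imp_le fun q hq => ((congrFun hab q).mpr hq).le)
      (le_of_forall_lt_rat_imp_le fun q hq => ((congrFun hab q).mp hq).le)

end

theorem uInvariant_iff_measurable_invariant_sets_general
    {E : Type*} [MeasurableSpace E] (m : Measure E)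
    (U : ℝ → Kernel E E)
    (hU : SubMarkovResolvent U) (hm : SubInvariantMeasure m U)
    (p : ℝ≥0∞) (u : E → ℝ) (hu : MemLp u p m) :
    (∀ A : Set E,
        MeasurableSet[MeasurableSpace.generateFrom {B | UInvariantSet m U B}] A →
        UInvariantSet m U A) ∧
    (UInvariant m U u ↔ ∃ v : E → ℝ, v =ᵐ[m] u ∧
        Measurable[MeasurableSpace.generateFrom {B | UInvariantSet m U B}] v) := by
  have hgen : MeasurableSpace.generateFrom {B | UInvariantSet m U B} = invariantSigma m U := by
    simp_rw [uInvariantSet_iff hU]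
    exact @MeasurableSpace.generateFrom_measurableSet E (invariantSigma m U)
  rw [hgen]
  refine ⟨fun A hA => (uInvariantSet_iff hU).2 hA, fun hinv => ?_, ?_⟩
  · obtain ⟨v, hv, hvu⟩ : ∃ v, Measurable v ∧ v =ᵐ[m] u :=
      ⟨hu.1.mk u, hu.1.stronglyMeasurable_mk.measurable, hu.1.ae_eq_mk.symm⟩
    exact ⟨v, hvu, measurable_invariantSigma_iff.2
      ⟨hv, .of_uInvariant hU hv (uInvariant_congr hm hvu hinv)⟩⟩
  · rintro ⟨v, hvu, hv⟩
    exact uInvariant_congr hm hvu.symm (measurable_invariantSigma_iff.1 hv).2.uInvariant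

/-- The collection of `U`-invariant sets is a σ-algebra (the σ-algebra it
generates consists of `U`-invariant sets), and `u ∈ L^p(E,m)` is `U`-invariant iff `u` is
(m-a.e. equal to a function) measurable w.r.t. this σ-algebra. -/
theorem uInvariant_iff_measurable_invariant_sets
    {E : Type*} [MeasurableSpace E] (m : Measure E) [SigmaFinite m]
    (U : ℝ → Kernel E E)
    (hU : SubMarkovResolvent U) (hm : SubInvariantMeasure m U)
    (p : ℝ≥0∞) (u : E → ℝ) (hu : MemLp u p m) :
    (∀ A : Set E,
        MeasurableSet[MeasurableSpace.generateFrom {B | UInvariantSet m U B}] A →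
        UInvariantSet m U A) ∧
    (UInvariant m U u ↔ ∃ v : E → ℝ, v =ᵐ[m] u ∧
        Measurable[MeasurableSpace.generateFrom {B | UInvariantSet m U B}] v) :=
  uInvariant_iff_measurable_invariant_sets_general m U hU hm p u hu
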